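/- The numbers GR(k,m,r) satisfy GR(k+1,m,r) ≤ f(k, M, M, r) where M = GR(k,m,r) and f is defined by f(k,0,m,r)=0, f(k,j+1,m,r)= f(k,j,m,r) + r^{(k+2)^{m-j-1+f(k,j,m,r)}}; consequently GR(k,m,r) is bounded above, as a function of (k,m,r), by a function obtained from H(m,r) by iterating f at most k−1 times. -/

import Mathlib

/-- A word of length `n` over alphabet `[k]` together with one variable symbol `v`
(encoded as `none`). -/
abbrev VWord (k n : ℕ) := Fin n → Option (Fin k)

/-- `x` is a variable word: the variable occurs at least once. -/
def IsVarWord {k n : ℕ} (x : VWord k n) : Prop := ∃ i, x i = none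

/-- A word of length `n` over alphabet `[k]` together with `m` variables `v₀,…,v_{m-1}`. -/
abbrev MWord (k m n : ℕ) := Fin n → Fin k ⊕ Fin m

/-- `w` is an `m`-dimensional variable word: each variable occurs at least once and
the variables are in block position. -/
def IsMVarWord {k m n : ℕ} (w : MWord k m n) : Prop :=
  (∀ j : Fin m, ∃ i, w i = Sum.inr j) ∧
  ∀ i i' : Fin n, ∀ j j' : Fin m, i < i' → w i = Sum.inr j → w i' = Sum.inr j' → j ≤ j'

/-- Substitution of a sequence of symbols (letters or the variable `v`) into an
`m`-dimensional variable word. -/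
def subst {k m n : ℕ} (w : MWord k m n) (x : Fin m → Option (Fin k)) : VWord k n :=
  fun i => Sum.elim some x (w i)

/-- Substitution of a sequence of symbols (letters or variables `v₀,…,v_{m'-1}`) into an
`m`-dimensional variable word. -/
def msubst {k m m' n : ℕ} (w : MWord k m n) (u : Fin m → Fin k ⊕ Fin m') : MWord k m' n :=
  fun i => Sum.elim Sum.inl u (w i)

/-- `(a,b)`-equivalence of words over `[k] ∪ {v}`: for every symbol `e ∉ {a,b}`
(including the variable), `x` and `y` carry `e` at the same positions. -/
def ABEquiv {k n : ℕ} (a b : Fin k) (x y : Fin n → Option (Fin k)) : Prop :=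
  ∀ e : Option (Fin k), e ≠ some a → e ≠ some b → ∀ i, (x i = e ↔ y i = e)

/-- A coloring `c` is `(a,b)`-insensitive over `w`. -/
def Insensitive {k m n r : ℕ} (c : VWord k n → Fin r) (a b : Fin k) (w : MWord k m n) : Prop :=
  ∀ x y : VWord k m, IsVarWord x → IsVarWord y → ABEquiv a b x y →
    c (subst w x) = c (subst w y)

/-- A block sequence of nonempty finite subsets of ℕ. -/
def IsBlockSeq {n : ℕ} (s : Fin n → Finset ℕ) : Prop :=
  (∀ i, (s i).Nonempty) ∧ ∀ i j : Fin n, i < j → ∀ a ∈ s i, ∀ b ∈ s j, a < b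

/-- The set of nonempty unions of a sequence of finite sets. -/
def NU {n : ℕ} (s : Fin n → Finset ℕ) : Set (Finset ℕ) :=
  {u | ∃ t : Finset (Fin n), t.Nonempty ∧ u = t.biUnion s}

/-- The Hindman property for `n₀`. -/
def HProp (m r n₀ : ℕ) : Prop :=
  ∀ n, n₀ ≤ n → ∀ s : Fin n → Finset ℕ, IsBlockSeq s → ∀ c : Finset ℕ → Fin r,
    ∃ t : Fin m → Finset ℕ, IsBlockSeq t ∧ (∀ j, t j ∈ NU s) ∧
      ∃ col, ∀ u ∈ NU t, c u = col

/-- The finite Hindman number `H(m,r)`. -/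
noncomputable def Hnum (m r : ℕ) : ℕ := sInf {n₀ | 0 < n₀ ∧ HProp m r n₀}

/-- The Graham–Rothschild base-case property for `n₀`. -/
def GRProp (k m r n₀ : ℕ) : Prop :=
  ∀ n, n₀ ≤ n → ∀ c : VWord k n → Fin r,
    ∃ w : MWord k m n, IsMVarWord w ∧
      ∃ col, ∀ x : VWord k m, IsVarWord x → c (subst w x) = col

/-- The Graham–Rothschild base-case number `GR(k,m,r)`. -/
noncomputable def GRnum (k m r : ℕ) : ℕ := sInf {n₀ | 0 < n₀ ∧ GRProp k m r n₀}

/-- The insensitivity property for `n₀`. -/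
def ShProp (k m r n₀ : ℕ) : Prop :=
  ∀ n, n₀ ≤ n → ∀ a b : Fin (k+1), a ≠ b → ∀ c : VWord (k+1) n → Fin r,
    ∃ w : MWord (k+1) m n, IsMVarWord w ∧ Insensitive c a b w

/-- The insensitivity number `Sh_v(k,m,r)`. -/
noncomputable def Shv (k m r : ℕ) : ℕ := sInf {n₀ | 0 < n₀ ∧ ShProp k m r n₀}

/-- The recursively defined bounding function `f(k,j,m,r)`. -/
def fGR : ℕ → ℕ → ℕ → ℕ → ℕ
  | _, 0, _, _ => 0
  | k, j+1, m, r =>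
    if k = 0 ∨ m = 0 ∨ r = 0 then 0
    else fGR k j m r + r ^ ((k+2) ^ (m - j - 1 + fGR k j m r))

/-- The bound for `GR(k,m,r)` obtained by iterating `fGR` starting from `H(m,r)`. -/
noncomputable def GRbound (m r : ℕ) : ℕ → ℕ
  | 0 => Hnum m r
  | j+1 => fGR (j+1) (GRbound m r j) (GRbound m r j) r

/-- Insert the word `(a,…,a,b,…,b)` (with `t` copies of `a` and `d - t` copies of `b`)
into `z` at position `p`. -/
def insertAt {k q : ℕ} (d : ℕ) (a b : Fin (k+1)) (p t : ℕ)
    (z : Fin q → Option (Fin (k+1))) : Fin (q + d) → Option (Fin (k+1)) :=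
  fun i =>
    if h : (i : ℕ) < p ∧ (i : ℕ) < q then z ⟨i, h.2⟩
    else if (i : ℕ) < p + t then some a
    else if (i : ℕ) < p + d then some b
    else if h2 : (i : ℕ) - d < q then z ⟨(i : ℕ) - d, h2⟩
    else none


open Hindman


noncomputable def phiF (u : Finset ℕ) : ℕ := ∑ i ∈ u, 2 ^ i

def bitsF (n : ℕ) : Finset ℕ := n.bitIndices.toFinset

lemma phiF_bitsF (n : ℕ) : phiF (bitsF n) = n := by
  have hnd : n.bitIndices.Nodup := Nat.bitIndices_sorted.nodup
  rw [phiF, bitsF, List.sum_toFinset _ hnd, Nat.twoPowSum_bitIndices]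

lemma bitsF_phiF (u : Finset ℕ) : bitsF (phiF u) = u := by
  have h1 : ((u.sort (· ≤ ·)).map (fun i => 2 ^ i)).sum = phiF u := by
    have := List.sum_toFinset (fun i => 2 ^ i) (Finset.sort_nodup u (· ≤ ·))
    rw [Finset.sort_toFinset] at this
    rw [phiF, ← this]
  rw [bitsF, ← h1, Nat.bitIndices_twoPowsum u.sortedLT_sort, Finset.sort_toFinset]

lemma bitsF_eq_empty {n : ℕ} (h : bitsF n = ∅) : n = 0 := by
  have := phiF_bitsF n; rw [h] at this; simpa [phiF] using this.symm

lemma bitsF_add_of_disjoint {x y t : ℕ} (hx : ∀ p ∈ bitsF x, p < t) (hy : 2 ^ t ∣ y) :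
    bitsF (x + y) = bitsF x ∪ bitsF y := by
  have hyt : ∀ p ∈ bitsF y, t ≤ p := by
    obtain ⟨m, rfl⟩ := hy
    intro p hp
    rw [bitsF, List.mem_toFinset, Nat.bitIndices_two_pow_mul] at hp
    obtain ⟨q, -, rfl⟩ := List.mem_map.mp hp
    omega
  have hdisj : Disjoint (bitsF x) (bitsF y) := by
    rw [Finset.disjoint_left]
    intro p hpx hpy
    exact absurd (hyt p hpy) (Nat.not_le.mpr (hx p hpx))
  have : phiF (bitsF x ∪ bitsF y) = x + y := by
    rw [phiF, Finset.sum_union hdisj, ← phiF, ← phiF, phiF_bitsF, phiF_bitsF]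
  rw [← this, bitsF_phiF]


lemma FS_drop_mono {M} [AddSemigroup M] (a : Stream' M) {n n' : ℕ} (h : n ≤ n') :
    FS (a.drop n') ⊆ FS (a.drop n) := by
  obtain ⟨d, rfl⟩ := Nat.exists_eq_add_of_le h
  rw [← Stream'.drop_drop]
  exact FS_iter_tail_sub_FS _ _

lemma Ico_sum_mem_FS (b : Stream' ℕ) :
    ∀ d N, (∑ i ∈ Finset.Ico N (N + d + 1), b i) ∈ FS (b.drop N) := by
  intro d
  induction d with
  | zero =>
    intro N; have h := FS.head (b.drop N); rw [Stream'.head_drop] at h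
    simp only [Nat.add_zero, Nat.Ico_succ_singleton, Finset.sum_singleton (f := fun i => b i)]; exact h
  | succ d ih =>
    intro N
    have hsp : ∑ i ∈ Finset.Ico N (N + (d + 1) + 1), b i
        = b N + ∑ i ∈ Finset.Ico (N + 1) (N + 1 + d + 1), b i := by
      rw [Finset.sum_eq_sum_Ico_succ_bot (f := fun i => b i) (by omega)]
      have he : N + (d + 1) + 1 = N + 1 + d + 1 := by omega
      rw [he]
    rw [hsp]
    have h2 := ih (N + 1)
    have hdt : (b.drop N).tail = b.drop (N + 1) := by
      rw [Stream'.tail_eq_drop, Stream'.drop_drop, Nat.add_comm]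
    have h3 := FS.cons (b.drop N) _ (by rw [hdt]; exact h2)
    rwa [Stream'.head_drop] at h3

lemma exists_block_sum_dvd (b : Stream' ℕ) (hpos : ∀ i, 0 < b i) (N t : ℕ) :
    ∃ x, x ∈ FS (b.drop N) ∧ 0 < x ∧ 2 ^ t ∣ x := by
  have key : ∃ j1 j2, j1 < j2 ∧
      (∑ i ∈ Finset.Ico N (N + j1), b i) % 2 ^ t = (∑ i ∈ Finset.Ico N (N + j2), b i) % 2 ^ t := by
    obtain ⟨j1, j2, hne, heq⟩ := Fintype.exists_ne_map_eq_of_card_lt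
      (fun j : Fin (2 ^ t + 1) => (⟨(∑ i ∈ Finset.Ico N (N + (j : ℕ)), b i) % 2 ^ t,
        Nat.mod_lt _ (Nat.pow_pos (by norm_num))⟩ : Fin (2 ^ t))) (by simp)
    have heq' := congrArg Fin.val heq
    simp only at heq'
    rcases lt_trichotomy (j1 : ℕ) (j2 : ℕ) with h | h | h
    · exact ⟨j1, j2, h, heq'⟩
    · exact (hne (Fin.ext h)).elim
    · exact ⟨j2, j1, h, heq'.symm⟩
  obtain ⟨j1, j2, hlt, heq⟩ := key
  set A := ∑ i ∈ Finset.Ico N (N + j1), b i with hA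
  set C := ∑ i ∈ Finset.Ico N (N + j2), b i with hC
  have hsplit : A + ∑ i ∈ Finset.Ico (N + j1) (N + j2), b i = C := by
    rw [hA, hC, Finset.sum_Ico_consecutive (f := fun i => b i)] <;> omega
  refine ⟨∑ i ∈ Finset.Ico (N + j1) (N + j2), b i, ?_, ?_, ?_⟩
  · have := Ico_sum_mem_FS b (j2 - j1 - 1) (N + j1)
    have harith : N + j1 + (j2 - j1 - 1) + 1 = N + j2 := by omega
    rw [harith] at this
    exact FS_drop_mono b (Nat.le_add_right N j1) this
  · have hmem : N + j1 ∈ Finset.Ico (N + j1) (N + j2) := by simp; omega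
    exact lt_of_lt_of_le (hpos (N + j1)) (Finset.single_le_sum (fun i _ => Nat.zero_le _) hmem)
  · have hAC : A ≤ C := by omega
    have hd := (Nat.modEq_iff_dvd' hAC).mp heq
    have : C - A = ∑ i ∈ Finset.Ico (N + j1) (N + j2), b i := by omega
    rwa [this] at hd

lemma bitsF_ge_of_dvd {t y : ℕ} (hy : 2 ^ t ∣ y) : ∀ p ∈ bitsF y, t ≤ p := by
  obtain ⟨m, rfl⟩ := hy
  intro p hp
  rw [bitsF, List.mem_toFinset, Nat.bitIndices_two_pow_mul] at hp
  obtain ⟨q, -, rfl⟩ := List.mem_map.mp hp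
  omega

lemma phiF_empty : phiF ∅ = 0 := by simp [phiF]

lemma FS_add_finset {X : Finset ℕ} {b : Stream' ℕ} (h : ∀ x ∈ X, x ∈ Hindman.FS b) :
    ∃ n, ∀ x ∈ X, ∀ y ∈ Hindman.FS (b.drop n), x + y ∈ Hindman.FS b := by
  classical
  induction X using Finset.induction with
  | empty => exact ⟨0, by simp⟩
  | @insert a X ha ih =>
    obtain ⟨n1, hn1⟩ := ih (fun x hx => h x (Finset.mem_insert_of_mem hx))
    obtain ⟨n2, hn2⟩ := Hindman.FS.add (h a (Finset.mem_insert_self a X))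
    refine ⟨max n1 n2, ?_⟩
    intro x hx y hy
    rcases Finset.mem_insert.mp hx with rfl | hx'
    · exact hn2 y (FS_drop_mono b (le_max_right n1 n2) hy)
    · exact hn1 x hx' y (FS_drop_mono b (le_max_left n1 n2) hy)
lemma bitsF_zero : bitsF 0 = ∅ := by
  have := bitsF_phiF ∅
  rwa [phiF_empty] at this

lemma extraction (b : Stream' ℕ) (hpos : ∀ i, 0 < b i) :
    ∀ h : ℕ, ∃ (σ : ℕ → ℕ) (tb ub : ℕ),
      (∀ j < h, 0 < σ j) ∧
      (∀ j j' : ℕ, j < j' → j' < h → ∀ p ∈ bitsF (σ j), ∀ q ∈ bitsF (σ j'), p < q) ∧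
      (∀ J : Finset ℕ, J ⊆ Finset.range h → J.Nonempty → (∑ j ∈ J, σ j) ∈ FS b) ∧
      (∀ J : Finset ℕ, J ⊆ Finset.range h → J.Nonempty →
        ∀ y ∈ FS (b.drop tb), (∑ j ∈ J, σ j) + y ∈ FS b) ∧
      (∀ J : Finset ℕ, J ⊆ Finset.range h →
        bitsF (∑ j ∈ J, σ j) = J.biUnion (fun j => bitsF (σ j))) ∧
      (∀ j < h, ∀ p ∈ bitsF (σ j), p < ub) := by
  classical
  intro h
  induction h with
  | zero =>
    refine ⟨fun _ => 0, 0, 0, by omega, by omega, ?_, ?_, ?_, by omega⟩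
    · intro J hJ hne
      exact (hne.ne_empty (Finset.subset_empty.mp (by simpa using hJ))).elim
    · intro J hJ hne
      exact (hne.ne_empty (Finset.subset_empty.mp (by simpa using hJ))).elim
    · intro J hJ
      have hJe : J = ∅ := Finset.subset_empty.mp (by simpa using hJ)
      subst hJe
      simp [bitsF_zero]
  | succ h ih =>
    obtain ⟨σ, tb, ub, h1, h2, h3, h4, h5, h6⟩ := ih
    obtain ⟨x, hxFS, hxpos, hxdvd⟩ := exists_block_sum_dvd b hpos tb ub
    set σ' : ℕ → ℕ := Function.update σ h x with hσ'
    have hσ'h : σ' h = x := Function.update_self h x σ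
    have hσ'lt : ∀ j < h, σ' j = σ j := fun j hj => Function.update_of_ne (by omega) x σ
    -- sums over J not containing h
    have hsum_no : ∀ J : Finset ℕ, J ⊆ Finset.range h → (∑ j ∈ J, σ' j) = ∑ j ∈ J, σ j := by
      intro J hJ
      exact Finset.sum_congr rfl (fun j hj => hσ'lt j (Finset.mem_range.mp (hJ hj)))
    -- decomposition for J ⊆ range (h+1)
    have hdec : ∀ J : Finset ℕ, J ⊆ Finset.range (h+1) → h ∈ J →
        (∑ j ∈ J, σ' j) = (∑ j ∈ J.erase h, σ j) + x ∧ J.erase h ⊆ Finset.range h := by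
      intro J hJ hhJ
      have hsub : J.erase h ⊆ Finset.range h := by
        intro j hj
        have := hJ (Finset.mem_of_mem_erase hj)
        have := Finset.ne_of_mem_erase hj
        simp only [Finset.mem_range] at *
        omega
      constructor
      · rw [← Finset.add_sum_erase J σ' hhJ, hσ'h, Nat.add_comm, hsum_no _ hsub]
      · exact hsub
    have hFSx : x ∈ FS b := FS_drop_mono b (Nat.zero_le tb) hxFS
    -- new (3)
    have h3' : ∀ J : Finset ℕ, J ⊆ Finset.range (h+1) → J.Nonempty → (∑ j ∈ J, σ' j) ∈ FS b := by
      intro J hJ hne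
      by_cases hhJ : h ∈ J
      · obtain ⟨hdecs, hsub⟩ := hdec J hJ hhJ
        rw [hdecs]
        rcases (J.erase h).eq_empty_or_nonempty with he | hne'
        · rw [he]; simpa using hFSx
        · exact h4 _ hsub hne' x hxFS
      · have hsub : J ⊆ Finset.range h := by
          intro j hj
          have := hJ hj
          simp only [Finset.mem_range] at *
          rcases Nat.lt_succ_iff_lt_or_eq.mp this with h' | rfl
          · exact h'
          · exact (hhJ hj).elim
        rw [hsum_no J hsub]
        exact h3 J hsub hne
    -- new (4)
    have h4' : ∃ tb', ∀ J : Finset ℕ, J ⊆ Finset.range (h+1) → J.Nonempty →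
        ∀ y ∈ FS (b.drop tb'), (∑ j ∈ J, σ' j) + y ∈ FS b := by
      set X : Finset ℕ :=
        ((Finset.range (h+1)).powerset.filter Finset.Nonempty).image (fun J => ∑ j ∈ J, σ' j)
        with hX
      have hXFS : ∀ z ∈ X, z ∈ FS b := by
        intro z hz
        rw [hX] at hz
        obtain ⟨J, hJ, rfl⟩ := Finset.mem_image.mp hz
        obtain ⟨hJ1, hJ2⟩ := Finset.mem_filter.mp hJ
        exact h3' J (Finset.mem_powerset.mp hJ1) hJ2
      obtain ⟨n, hn⟩ := FS_add_finset hXFS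
      refine ⟨n, fun J hJ hne y hy => ?_⟩
      refine hn _ ?_ y hy
      rw [hX]
      exact Finset.mem_image_of_mem _ (Finset.mem_filter.mpr ⟨Finset.mem_powerset.mpr hJ, hne⟩)
    obtain ⟨tb', h4'⟩ := h4'
    -- bits bound on unions: any sum over J ⊆ range h has bits < ub
    have hbnd : ∀ J : Finset ℕ, J ⊆ Finset.range h → ∀ p ∈ bitsF (∑ j ∈ J, σ j), p < ub := by
      intro J hJ p hp
      rw [h5 J hJ] at hp
      obtain ⟨j, hjJ, hpj⟩ := Finset.mem_biUnion.mp hp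
      exact h6 j (Finset.mem_range.mp (hJ hjJ)) p hpj
    -- new (5)
    have h5' : ∀ J : Finset ℕ, J ⊆ Finset.range (h+1) →
        bitsF (∑ j ∈ J, σ' j) = J.biUnion (fun j => bitsF (σ' j)) := by
      intro J hJ
      by_cases hhJ : h ∈ J
      · obtain ⟨hdecs, hsub⟩ := hdec J hJ hhJ
        rw [hdecs, bitsF_add_of_disjoint (hbnd _ hsub) hxdvd, h5 _ hsub]
        have : J.biUnion (fun j => bitsF (σ' j))
            = (J.erase h).biUnion (fun j => bitsF (σ' j)) ∪ bitsF (σ' h) := by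
          conv_lhs => rw [← Finset.insert_erase hhJ]
          rw [Finset.biUnion_insert, Finset.union_comm]
        rw [this, hσ'h]
        congr 1
        exact Finset.biUnion_congr rfl (fun j hj => by
          rw [hσ'lt j (Finset.mem_range.mp (hsub hj))])
      · have hsub : J ⊆ Finset.range h := by
          intro j hj
          have := hJ hj
          simp only [Finset.mem_range] at *
          rcases Nat.lt_succ_iff_lt_or_eq.mp this with h' | rfl
          · exact h'
          · exact (hhJ hj).elim
        rw [hsum_no J hsub, h5 J hsub]
        exact Finset.biUnion_congr rfl (fun j hj => by
          rw [hσ'lt j (Finset.mem_range.mp (hsub hj))])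
    refine ⟨σ', tb', max ub ((bitsF x).sup id + 1), ?_, ?_, h3', h4', h5', ?_⟩
    · intro j hj
      rcases Nat.lt_succ_iff_lt_or_eq.mp hj with h' | rfl
      · rw [hσ'lt j h']; exact h1 j h'
      · rw [hσ'h]; exact hxpos
    · intro j j' hjj' hj' p hp q hq
      rcases Nat.lt_succ_iff_lt_or_eq.mp hj' with h' | rfl
      · rw [hσ'lt j (by omega)] at hp
        rw [hσ'lt j' h'] at hq
        exact h2 j j' hjj' h' p hp q hq
      · rw [hσ'h] at hq
        rw [hσ'lt j hjj'] at hp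
        have h6' := h6 j hjj' p hp
        have := bitsF_ge_of_dvd hxdvd q hq
        omega
    · intro j hj p hp
      rcases Nat.lt_succ_iff_lt_or_eq.mp hj with h' | rfl
      · rw [hσ'lt j h'] at hp
        have := h6 j h' p hp
        omega
      · rw [hσ'h] at hp
        have : p ≤ (bitsF x).sup id := Finset.le_sup (f := id) hp
        omega
lemma pos_of_mem_FS {a : Stream' ℕ} (hp : ∀ i, 0 < a i) {x : ℕ} (hx : x ∈ FS a) : 0 < x := by
  induction hx with
  | head' a => exact hp 0
  | tail' a m h ih => exact ih (fun i => hp (i + 1))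
  | cons' a m h ih =>
    have := hp 0
    have : (0:ℕ) < a.head := hp 0
    omega

lemma ultrafilter_fin_partition {r : ℕ} (U : Ultrafilter ℕ) (f : ℕ → Fin r) :
    ∃ v : Fin r, {n | f n = v} ∈ U := by
  by_contra hc
  push_neg at hc
  have h1 : ∀ v : Fin r, {n | f n ≠ v} ∈ U := by
    intro v
    have := (Ultrafilter.compl_mem_iff_notMem (s := {n | f n = v}) (f := U)).mpr (hc v)
    exact this
  have h2 : (⋂ v : Fin r, {n | f n ≠ v}) ∈ U := by
    exact (Filter.iInter_mem (s := fun v : Fin r => {n | f n ≠ v})).mpr h1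
  obtain ⟨n, hn⟩ := Filter.nonempty_of_mem h2
  simp only [Set.mem_iInter, Set.mem_setOf_eq] at hn
  exact hn (f n) rfl

/-- infinite block Hindman: for any coloring of finsets there is an m-term block sequence
with monochromatic nonempty unions -/
lemma hindman_blocks (m r : ℕ) (c : Finset ℕ → Fin r) :
    ∃ t : Fin m → Finset ℕ, IsBlockSeq t ∧ ∃ col, ∀ u ∈ NU t, c u = col := by
  classical
  set a : Stream' ℕ := fun i => 2 ^ i with ha
  have hapos : ∀ i, 0 < a i := fun i => Nat.pow_pos (by norm_num)
  obtain ⟨U, Uidem, hUa⟩ := exists_idempotent_ultrafilter_le_FS a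
  obtain ⟨v, hv⟩ := ultrafilter_fin_partition U (fun n => c (bitsF n))
  have hs0 : ({n | c (bitsF n) = v} ∩ FS a) ∈ U := Filter.inter_mem hv hUa
  obtain ⟨b, hb⟩ := exists_FS_of_large U Uidem _ hs0
  have hbpos : ∀ i, 0 < b i := by
    intro i
    have hbi : b i ∈ FS b := by
      have := FS.singleton b i
      exact this
    exact pos_of_mem_FS hapos ((hb hbi).2)
  obtain ⟨σ, tb, ub, h1, h2, h3, h4, h5, h6⟩ := extraction b hbpos m
  refine ⟨fun j => bitsF (σ j), ⟨?_, ?_⟩, v, ?_⟩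
  · intro j
    rw [Finset.nonempty_iff_ne_empty]
    intro he
    exact absurd (bitsF_eq_empty he) (by have := h1 j j.2; omega)
  · intro i j hij p hp q hq
    exact h2 i j hij j.2 p hp q hq
  · intro u hu
    obtain ⟨T, hTne, rfl⟩ := hu
    set J : Finset ℕ := T.image Fin.val with hJ
    have hJsub : J ⊆ Finset.range m := by
      intro j hj
      obtain ⟨j', _, rfl⟩ := Finset.mem_image.mp hj
      exact Finset.mem_range.mpr j'.2
    have hJne : J.Nonempty := hTne.image _
    have hsum : ∑ j ∈ J, σ j = ∑ j ∈ T, σ j.val := by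
      rw [hJ, Finset.sum_image (fun x _ y _ h => Fin.ext h)]
    have hbits : T.biUnion (fun j => bitsF (σ j.val)) = bitsF (∑ j ∈ J, σ j) := by
      rw [h5 J hJsub, hJ, Finset.image_biUnion]
    rw [hbits]
    have hmem : (∑ j ∈ J, σ j) ∈ FS b := h3 J hJsub hJne
    exact (hb hmem).1
lemma FUfin (m r : ℕ) : ∃ n₀, 0 < n₀ ∧ ∀ c : Finset ℕ → Fin r,
    ∃ t : Fin m → Finset ℕ, IsBlockSeq t ∧ (∀ j, t j ⊆ Finset.range n₀) ∧
      ∃ col, ∀ u ∈ NU t, c u = col := by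
  classical
  by_contra hcon
  push_neg at hcon
  have hbad : ∀ n : ℕ, ∃ c : Finset ℕ → Fin r, ∀ t : Fin m → Finset ℕ,
      IsBlockSeq t → (∀ j, t j ⊆ Finset.range (n+1)) →
      ∀ col, ∃ u ∈ NU t, c u ≠ col := by
    intro n
    obtain ⟨c, hc⟩ := hcon (n+1) (Nat.succ_pos n)
    refine ⟨c, fun t hts htr col => ?_⟩
    have := hc t
    exact this hts htr col
  choose C hC using hbad
  set U : Ultrafilter ℕ := Ultrafilter.of Filter.atTop with hU
  have hUle : (U : Filter ℕ) ≤ Filter.atTop := Ultrafilter.of_le Filter.atTop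
  have hlim : ∀ u : Finset ℕ, ∃ v : Fin r, {n | C n u = v} ∈ U :=
    fun u => ultrafilter_fin_partition U (fun n => C n u)
  choose climit hclimit using hlim
  obtain ⟨t, hts, col, hcol⟩ := hindman_blocks m r climit
  set N : ℕ := (Finset.univ.sup (fun j : Fin m => (t j).sup id)) + 1 with hN
  have htr : ∀ j, t j ⊆ Finset.range N := by
    intro j i hi
    rw [Finset.mem_range, hN]
    have h1 : i ≤ (t j).sup id := Finset.le_sup (f := id) hi
    have h2 : (t j).sup id ≤ Finset.univ.sup (fun j : Fin m => (t j).sup id) :=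
      Finset.le_sup (f := fun j : Fin m => (t j).sup id) (Finset.mem_univ j)
    omega
  set NUfin : Finset (Finset ℕ) :=
    ((Finset.univ : Finset (Finset (Fin m))).filter Finset.Nonempty).image
      (fun T => T.biUnion t) with hNUfin
  have hA : (⋂ u ∈ NUfin, {n | C n u = climit u}) ∈ U :=
    (Filter.biInter_finset_mem NUfin).mpr (fun u _ => hclimit u)
  have hB : {n | N ≤ n} ∈ U := hUle (Filter.Ici_mem_atTop N)
  obtain ⟨n, hn⟩ := Filter.nonempty_of_mem (Filter.inter_mem hA hB)
  obtain ⟨hnA, hnB⟩ := hn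
  have hCeq : ∀ u ∈ NU t, C n u = climit u := by
    intro u hu
    obtain ⟨T, hTne, rfl⟩ := hu
    have hmem : T.biUnion t ∈ NUfin := by
      rw [hNUfin]
      exact Finset.mem_image_of_mem _ (Finset.mem_filter.mpr ⟨Finset.mem_univ T, hTne⟩)
    simp only [Set.mem_iInter] at hnA
    exact hnA _ hmem
  obtain ⟨u, hu, hne⟩ := hC n t hts
    (fun j => (htr j).trans (Finset.range_subset_range.mpr (by simp only [Set.mem_setOf_eq] at hnB; omega))) col
  exact hne (by rw [hCeq u hu]; exact hcol u hu)

lemma HProp_holds (m r : ℕ) : ∃ n₀, 0 < n₀ ∧ HProp m r n₀ := by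
  classical
  obtain ⟨n₀, hpos, hFU⟩ := FUfin m r
  refine ⟨n₀, hpos, ?_⟩
  intro n hn s hs c
  set sgg : ℕ → Finset ℕ := fun i => if h : i < n then s ⟨i, h⟩ else ∅ with hsgg
  obtain ⟨tgg, htggs, htggr, col, hcol⟩ := hFU (fun u => c (u.biUnion sgg))
  have htggrn : ∀ j, ∀ i ∈ tgg j, i < n := by
    intro j i hi
    have := Finset.mem_range.mp (htggr j hi)
    omega
  refine ⟨fun j => (tgg j).biUnion sgg, ⟨?_, ?_⟩, ?_, col, ?_⟩
  · intro j
    obtain ⟨i, hi⟩ := htggs.1 j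
    have hin := htggrn j i hi
    obtain ⟨x, hx⟩ := hs.1 ⟨i, hin⟩
    exact ⟨x, Finset.mem_biUnion.mpr ⟨i, hi, by rw [hsgg]; simpa [hin] using hx⟩⟩
  · intro j j' hjj' x hx y hy
    obtain ⟨i, hi, hxi⟩ := Finset.mem_biUnion.mp hx
    obtain ⟨i', hi', hyi⟩ := Finset.mem_biUnion.mp hy
    have hin := htggrn j i hi
    have hin' := htggrn j' i' hi'
    rw [hsgg] at hxi hyi
    simp only [hin, hin', dif_pos] at hxi hyi
    have hii' : i < i' := htggs.2 j j' hjj' i hi i' hi'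
    exact hs.2 ⟨i, hin⟩ ⟨i', hin'⟩ hii' x hxi y hyi
  · intro j
    refine ⟨(tgg j).attachFin (htggrn j), ?_, ?_⟩
    · obtain ⟨i, hi⟩ := htggs.1 j
      exact ⟨⟨i, htggrn j i hi⟩, (Finset.mem_attachFin _).mpr hi⟩
    · ext x
      simp only [Finset.mem_biUnion]
      constructor
      · rintro ⟨i, hi, hx⟩
        refine ⟨⟨i, htggrn j i hi⟩, (Finset.mem_attachFin _).mpr hi, ?_⟩
        rw [hsgg] at hx
        simpa [htggrn j i hi] using hx
      · rintro ⟨i, hi, hx⟩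
        refine ⟨i.val, (Finset.mem_attachFin _).mp hi, ?_⟩
        rw [hsgg]
        simpa [i.2] using hx
  · intro u hu
    obtain ⟨T, hTne, rfl⟩ := hu
    have : T.biUnion (fun j => (tgg j).biUnion sgg) = (T.biUnion tgg).biUnion sgg := by
      ext x
      simp only [Finset.mem_biUnion]
      tauto
    rw [this]
    exact hcol (T.biUnion tgg) ⟨T, hTne, rfl⟩
lemma GRProp_one (m r n₀ : ℕ) (h : HProp m r n₀) : GRProp 1 m r n₀ := by
  classical
  intro n hn c
  set s : Fin n → Finset ℕ := fun i => {↑i} with hsdef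
  have hsblock : IsBlockSeq s := by
    constructor
    · intro i; exact ⟨i, Finset.mem_singleton_self _⟩
    · intro i j hij a ha b hb
      rw [hsdef] at ha hb
      simp only [Finset.mem_singleton] at ha hb
      subst ha; subst hb
      exact hij
  obtain ⟨t, htb, htNU, col, hcol⟩ := h n hn s hsblock
    (fun u => c (fun i => if (i : ℕ) ∈ u then none else some 0))
  -- uniqueness of block membership
  have huniq : ∀ x : ℕ, ∀ j j' : Fin m, x ∈ t j → x ∈ t j' → j = j' := by
    intro x j j' hj hj'
    rcases lt_trichotomy j j' with h' | h' | h'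
    · exact ((lt_irrefl x) (htb.2 j j' h' x hj x hj')).elim
    · exact h'
    · exact ((lt_irrefl x) (htb.2 j' j h' x hj' x hj)).elim
  have htn : ∀ j : Fin m, ∀ x ∈ t j, x < n := by
    intro j x hx
    obtain ⟨T, hTne, hTeq⟩ := htNU j
    rw [hTeq] at hx
    obtain ⟨i, _, hi⟩ := Finset.mem_biUnion.mp hx
    rw [hsdef] at hi
    simp only [Finset.mem_singleton] at hi
    subst hi
    exact i.2
  set w : MWord 1 m n :=
    fun i => if h : ∃ j, (i : ℕ) ∈ t j then Sum.inr h.choose else Sum.inl 0 with hwdef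
  have hw1 : ∀ (i : Fin n) (j : Fin m), (i : ℕ) ∈ t j → w i = Sum.inr j := by
    intro i j hij
    have hex : ∃ j, (i : ℕ) ∈ t j := ⟨j, hij⟩
    simp only [hwdef]
    rw [dif_pos hex]
    rw [huniq i hex.choose j hex.choose_spec hij]
  have hw2 : ∀ (i : Fin n) (j : Fin m), w i = Sum.inr j → (i : ℕ) ∈ t j := by
    intro i j hwi
    simp only [hwdef] at hwi
    by_cases hex : ∃ j, (i : ℕ) ∈ t j
    · rw [dif_pos hex] at hwi
      have := hex.choose_spec
      rwa [Sum.inr_injective hwi] at this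
    · rw [dif_neg hex] at hwi
      exact absurd hwi (by simp)
  refine ⟨w, ⟨?_, ?_⟩, col, ?_⟩
  · intro j
    obtain ⟨x, hx⟩ := htb.1 j
    exact ⟨⟨x, htn j x hx⟩, hw1 _ j hx⟩
  · intro i i' j j' hii' hi hi'
    have h1 := hw2 i j hi
    have h2 := hw2 i' j' hi'
    by_contra hc
    push_neg at hc
    exact absurd (htb.2 j' j hc i' h2 i h1) (by omega)
  · intro x hx
    set K : Finset (Fin m) := Finset.univ.filter (fun j => x j = none) with hK
    have hKne : K.Nonempty := by
      obtain ⟨j, hj⟩ := hx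
      exact ⟨j, by rw [hK]; simp [hj]⟩
    have hueq : subst w x = fun i : Fin n => if (i : ℕ) ∈ K.biUnion t then (none : Option (Fin 1)) else some 0 := by
      funext i
      rw [subst]
      by_cases hex : ∃ j, (i : ℕ) ∈ t j
      · obtain ⟨j, hj⟩ := hex
        rw [hw1 i j hj]
        simp only [Sum.elim_inr]
        by_cases hxj : x j = none
        · have : (i : ℕ) ∈ K.biUnion t :=
            Finset.mem_biUnion.mpr ⟨j, by rw [hK]; simp [hxj], hj⟩
          rw [if_pos this, hxj]
        · have : (i : ℕ) ∉ K.biUnion t := by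
            intro hmem
            obtain ⟨j', hj', hij'⟩ := Finset.mem_biUnion.mp hmem
            rw [huniq i j j' hj hij'] at hxj
            rw [hK] at hj'
            simp only [Finset.mem_filter] at hj'
            exact hxj hj'.2
          rw [if_neg this]
          obtain ⟨l, hl⟩ := Option.ne_none_iff_exists'.mp hxj
          rw [hl]
          congr
          exact Subsingleton.elim l 0
      · have hwi : w i = Sum.inl 0 := by simp only [hwdef]; rw [dif_neg hex]
        rw [hwi]
        simp only [Sum.elim_inl]
        have : (i : ℕ) ∉ K.biUnion t := by
          intro hmem
          obtain ⟨j', _, hij'⟩ := Finset.mem_biUnion.mp hmem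
          exact hex ⟨j', hij'⟩
        rw [if_neg this]
    rw [hueq]
    exact hcol (K.biUnion t) ⟨K, hKne, rfl⟩
lemma fGR_succ (k j m r : ℕ) (hk : 0 < k) (hm : 0 < m) (hr : 0 < r) :
    fGR k (j+1) m r = fGR k j m r + r ^ ((k+2) ^ (m - j - 1 + fGR k j m r)) := by
  rw [fGR, if_neg]
  push_neg
  omega

lemma fGR_mono_j (k m r : ℕ) : Monotone (fun j => fGR k j m r) := by
  apply monotone_nat_of_le_succ
  intro j
  by_cases h : k = 0 ∨ m = 0 ∨ r = 0
  · show fGR k j m r ≤ fGR k (j+1) m r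
    rw [fGR, if_pos h]
    cases j with
    | zero => rw [fGR]
    | succ j => rw [fGR, if_pos h]
  · push_neg at h
    show fGR k j m r ≤ fGR k (j+1) m r
    rw [fGR_succ k j m r (by omega) (by omega) (by omega)]
    omega

lemma fGR_mono_m (k j r : ℕ) {m m' : ℕ} (h : m ≤ m') : fGR k j m r ≤ fGR k j m' r := by
  induction j with
  | zero => rw [fGR, fGR]
  | succ j ih =>
    by_cases hg : k = 0 ∨ m = 0 ∨ r = 0
    · show fGR k (j+1) m r ≤ _
      rw [fGR, if_pos hg]
      exact Nat.zero_le _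
    · push_neg at hg
      rw [fGR_succ k j m r (by omega) (by omega) (by omega),
          fGR_succ k j m' r (by omega) (by omega) (by omega)]
      have hpow : r ^ ((k+2) ^ (m - j - 1 + fGR k j m r))
          ≤ r ^ ((k+2) ^ (m' - j - 1 + fGR k j m' r)) := by
        apply Nat.pow_le_pow_right (by omega)
        apply Nat.pow_le_pow_right (by omega)
        omega
      omega

lemma fGR_pos (k j m r : ℕ) (hk : 0 < k) (hm : 0 < m) (hr : 0 < r) (hj : 0 < j) :
    0 < fGR k j m r := by
  obtain ⟨j', rfl⟩ : ∃ j', j = j' + 1 := ⟨j - 1, by omega⟩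
  rw [fGR_succ k j' m r hk hm hr]
  have : 0 < r ^ ((k+2) ^ (m - j' - 1 + fGR k j' m r)) := Nat.pow_pos hr
  omega
lemma insensitive_of_flip {k m n r : ℕ} (c : VWord k n → Fin r) (a b : Fin k) (w : MWord k m n)
    (hflip : ∀ (x : VWord k m) (j : Fin m), IsVarWord x → x j = some a →
      c (subst w x) = c (subst w (Function.update x j (some b)))) :
    Insensitive c a b w := by
  classical
  suffices H : ∀ (N : ℕ) (x y : VWord k m), IsVarWord x → IsVarWord y → ABEquiv a b x y →
      (Finset.univ.filter fun j => x j ≠ y j).card ≤ N → c (subst w x) = c (subst w y) by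
    exact fun x y hx hy he => H _ x y hx hy he le_rfl
  intro N
  induction N with
  | zero =>
    intro x y hx hy he hcard
    have hemp : (Finset.univ.filter fun j => x j ≠ y j) = ∅ := Finset.card_eq_zero.mp (by omega)
    have hxy : x = y := by
      funext j
      by_contra hne
      have hmem : j ∈ (Finset.univ.filter fun j => x j ≠ y j) := by simp [hne]
      rw [hemp] at hmem
      simp at hmem
    rw [hxy]
  | succ N ih =>
    intro x y hx hy he hcard
    rcases (Finset.univ.filter fun j => x j ≠ y j).eq_empty_or_nonempty with hD | hD
    · have hxy : x = y := by
        funext j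
        by_contra hne
        have : j ∈ (Finset.univ.filter fun j => x j ≠ y j) := by simp [hne]
        rw [hD] at this
        simp at this
      rw [hxy]
    · obtain ⟨j, hj⟩ := hD
      have hjne : x j ≠ y j := (Finset.mem_filter.mp hj).2
      have hxjab : x j = some a ∨ x j = some b := by
        by_contra hcon
        push_neg at hcon
        have := (he (x j) hcon.1 hcon.2 j).mp rfl
        exact hjne this.symm
      have hyjab : y j = some a ∨ y j = some b := by
        by_contra hcon
        push_neg at hcon
        exact hjne (((he (y j) hcon.1 hcon.2 j).mpr rfl))
      -- define x' agreeing with y at j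
      have key : ∀ x' : VWord k m, x' = Function.update x j (y j) →
          c (subst w x) = c (subst w x') := by
        intro x' hx'
        rcases hxjab with hxa | hxb
        · have hyb : y j = some b := by
            rcases hyjab with h' | h'
            · exact (hjne (hxa.trans h'.symm)).elim
            · exact h'
          rw [hx', hyb]
          exact hflip x j hx hxa
        · have hya : y j = some a := by
            rcases hyjab with h' | h'
            · exact h'
            · exact (hjne (hxb.trans h'.symm)).elim
          rw [hx', hya]
          have h2 : Function.update (Function.update x j (some a)) j (some b) = x := by
            funext i
            by_cases hi : i = j
            · subst hi; simp [hxb]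
            · simp [Function.update_of_ne hi]
          have h3 : IsVarWord (Function.update x j (some a)) := by
            obtain ⟨i, hi⟩ := hx
            have hij : i ≠ j := fun hc => by rw [hc, hxb] at hi; exact (Option.some_ne_none b hi)
            exact ⟨i, by rw [Function.update_of_ne hij]; exact hi⟩
          have := hflip (Function.update x j (some a)) j h3 (Function.update_self j (some a) x)
          rw [h2] at this
          exact this.symm
      set x' : VWord k m := Function.update x j (y j) with hx'def
      have hstep := key x' hx'def
      have hx'var : IsVarWord x' := by
        obtain ⟨i, hi⟩ := hx
        have hij : i ≠ j := by
          intro hc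
          rw [hc] at hi
          rcases hxjab with h' | h' <;> rw [h'] at hi <;> exact Option.some_ne_none _ hi
        exact ⟨i, by rw [hx'def, Function.update_of_ne hij]; exact hi⟩
      have he' : ABEquiv a b x' y := by
        intro e he1 he2 i
        by_cases hi : i = j
        · subst hi
          rw [hx'def, Function.update_self]
        · rw [hx'def, Function.update_of_ne hi]
          exact he e he1 he2 i
      have hcard' : (Finset.univ.filter fun i => x' i ≠ y i).card ≤ N := by
        have hsub : (Finset.univ.filter fun i => x' i ≠ y i)
            ⊆ (Finset.univ.filter fun i => x i ≠ y i).erase j := by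
          intro i hi
          simp only [Finset.mem_filter, Finset.mem_univ, true_and] at hi
          rw [Finset.mem_erase]
          constructor
          · intro hc
            subst hc
            rw [hx'def, Function.update_self] at hi
            exact hi rfl
          · simp only [Finset.mem_filter, Finset.mem_univ, true_and]
            intro hc
            by_cases hij : i = j
            · subst hij; rw [hx'def, Function.update_self] at hi; exact hi rfl
            · rw [hx'def, Function.update_of_ne hij] at hi; exact hi hc
        have := Finset.card_le_card hsub
        have hcerase := Finset.card_erase_of_mem hj
        omega
      rw [hstep]
      exact ih x' y hx'var hy he' hcard'
/-- start position of block `j` -/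
def NS (k M r j : ℕ) : ℕ := fGR k j M r

/-- length of block `j` -/
def dS (k M r j : ℕ) : ℕ := r ^ ((k+2) ^ (M - j - 1 + NS k M r j))

/-- the block containing position `i` -/
def blockOfS (k M r i : ℕ) : ℕ := Nat.findGreatest (fun j => NS k M r j ≤ i) (M - 1)

lemma NS_zero (k M r : ℕ) : NS k M r 0 = 0 := rfl

lemma NS_succ {k M r : ℕ} (hk : 0 < k) (hM : 0 < M) (hr : 0 < r) (j : ℕ) :
    NS k M r (j+1) = NS k M r j + dS k M r j :=
  fGR_succ k j M r hk hM hr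

lemma dS_pos {k M r : ℕ} (hr : 0 < r) (j : ℕ) : 0 < dS k M r j := Nat.pow_pos hr

lemma NS_mono (k M r : ℕ) : Monotone (fun j => NS k M r j) := fGR_mono_j k M r

lemma blockOfS_le (k M r i : ℕ) : blockOfS k M r i ≤ M - 1 :=
  Nat.findGreatest_le (P := fun j => NS k M r j ≤ i) (M - 1)

lemma blockOfS_lt {k M r : ℕ} (hM : 0 < M) (i : ℕ) : blockOfS k M r i < M :=
  lt_of_le_of_lt (blockOfS_le k M r i) (by omega)

lemma blockOfS_spec1 (k M r : ℕ) (i : ℕ) : NS k M r (blockOfS k M r i) ≤ i :=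
  Nat.findGreatest_spec (P := fun j => NS k M r j ≤ i) (Nat.zero_le (M-1))
    (show NS k M r 0 ≤ i by rw [NS_zero]; omega)

lemma blockOfS_spec2 {k M r : ℕ} (hM : 0 < M) {i : ℕ} (hi : i < NS k M r M) :
    i < NS k M r (blockOfS k M r i + 1) := by
  by_cases hb : blockOfS k M r i = M - 1
  · have heq : blockOfS k M r i + 1 = M := by omega
    rw [heq]; exact hi
  · have hlt : blockOfS k M r i + 1 ≤ M - 1 := by
      have := blockOfS_le k M r i
      omega
    have hng := Nat.findGreatest_is_greatest (P := fun j => NS k M r j ≤ i) (n := M - 1)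
      (k := blockOfS k M r i + 1)
      (show Nat.findGreatest (fun j => NS k M r j ≤ i) (M-1) < blockOfS k M r i + 1 by
        show blockOfS k M r i < blockOfS k M r i + 1
        omega) hlt
    simp only [not_le] at hng
    exact hng

lemma blockOfS_ge {k M r : ℕ} {j i : ℕ} (hjM : j < M) (hji : NS k M r j ≤ i) :
    j ≤ blockOfS k M r i :=
  Nat.le_findGreatest (by omega) hji

lemma blockOfS_eq {k M r : ℕ} {j i : ℕ} (hjM : j < M) (h1 : NS k M r j ≤ i)
    (h2 : i < NS k M r (j+1)) : blockOfS k M r i = j := by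
  have hge := blockOfS_ge hjM h1
  by_contra hne
  have hgt : j + 1 ≤ blockOfS k M r i := by omega
  have hspec := blockOfS_spec1 k M r i
  have hmono := NS_mono k M r hgt
  simp only at hmono
  show False
  have : NS k M r (j+1) ≤ i := le_trans hmono hspec
  omega

/-- the test word: `u` below block `j`, the `a^t b^(d-t)` pattern in block `j`,
pair-patterns with symbols `s` above block `j`, and `a`s beyond `NS M`. -/
def assembleS (k M r n : ℕ) (a b : Fin (k+1)) (T T' : ℕ → ℕ) (j t : ℕ)
    (u : Fin (NS k M r j) → Option (Fin (k+1))) (s : Fin (M - 1 - j) → Option (Fin (k+1))) :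
    VWord (k+1) n := fun i =>
  if h1 : (i:ℕ) < NS k M r j then u ⟨i, h1⟩
  else if (i:ℕ) < NS k M r M then
    (if blockOfS k M r i = j then (if (i:ℕ) - NS k M r j < t then some a else some b)
     else if (i:ℕ) - NS k M r (blockOfS k M r i) < T (blockOfS k M r i) then some a
     else if (i:ℕ) - NS k M r (blockOfS k M r i) < T' (blockOfS k M r i) then
       (if h3 : blockOfS k M r i - j - 1 < M - 1 - j then s ⟨blockOfS k M r i - j - 1, h3⟩
        else some a)
     else some b)
  else some a

def ChiS (k M r n : ℕ) (a b : Fin (k+1)) (c : VWord (k+1) n → Fin r) (T T' : ℕ → ℕ) (j t : ℕ) :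
    ((Fin (NS k M r j) → Option (Fin (k+1))) × (Fin (M - 1 - j) → Option (Fin (k+1)))) → Fin r :=
  fun p => c (assembleS k M r n a b T T' j t p.1 p.2)

lemma assembleS_congr (k M r n : ℕ) (a b : Fin (k+1)) (hM : 0 < M)
    {T T' S S' : ℕ → ℕ} {j : ℕ} (hjM : j < M)
    (hT : ∀ j', j < j' → j' < M → T j' = S j' ∧ T' j' = S' j') (t : ℕ)
    (u : Fin (NS k M r j) → Option (Fin (k+1))) (s : Fin (M - 1 - j) → Option (Fin (k+1))) :
    assembleS k M r n a b T T' j t u s = assembleS k M r n a b S S' j t u s := by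
  funext i
  rw [assembleS, assembleS]
  by_cases h1 : (i:ℕ) < NS k M r j
  · rw [dif_pos h1, dif_pos h1]
  · rw [dif_neg h1, dif_neg h1]
    by_cases h2 : (i:ℕ) < NS k M r M
    · rw [if_pos h2, if_pos h2]
      by_cases h3 : blockOfS k M r (i:ℕ) = j
      · rw [if_pos h3, if_pos h3]
      · rw [if_neg h3, if_neg h3]
        have hgt : j < blockOfS k M r (i:ℕ) := by
          have := blockOfS_ge hjM (show NS k M r j ≤ (i:ℕ) by omega)
          omega
        have hlt : blockOfS k M r (i:ℕ) < M := blockOfS_lt hM (i:ℕ)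
        obtain ⟨hTe, hT'e⟩ := hT _ hgt hlt
        rw [hTe, hT'e]
    · rw [if_neg h2, if_neg h2]

/-- iterated pigeonhole choice of the pairs, processing blocks from the top down -/
lemma choosePairs (k M r n : ℕ) (a b : Fin (k+1)) (hM : 0 < M) (c : VWord (k+1) n → Fin r) :
    ∀ h, h ≤ M → ∃ T T' : ℕ → ℕ,
      (∀ j, M - h ≤ j → j < M → T j < T' j ∧ T' j ≤ dS k M r j) ∧
      (∀ j, M - h ≤ j → j < M →
        ChiS k M r n a b c T T' j (T j) = ChiS k M r n a b c T T' j (T' j)) := by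
  intro h
  induction h with
  | zero => exact fun _ => ⟨fun _ => 0, fun _ => 0, fun j h1 h2 => by omega, fun j h1 h2 => by omega⟩
  | succ h ih =>
    intro hh
    obtain ⟨T, T', hp, hchi⟩ := ih (by omega)
    set j0 : ℕ := M - h - 1 with hj0
    have hj0M : j0 < M := by omega
    have hcard : Fintype.card
        (((Fin (NS k M r j0) → Option (Fin (k+1))) × (Fin (M - 1 - j0) → Option (Fin (k+1))))
          → Fin r) < Fintype.card (Fin (dS k M r j0 + 1)) := by
      rw [Fintype.card_fun, Fintype.card_prod, Fintype.card_fun, Fintype.card_fun]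
      simp only [Fintype.card_fin, Fintype.card_option]
      rw [← pow_add]
      have he : NS k M r j0 + (M - 1 - j0) = M - j0 - 1 + NS k M r j0 := by omega
      rw [he]
      have hd : dS k M r j0 = r ^ ((k + 1 + 1) ^ (M - j0 - 1 + NS k M r j0)) := rfl
      omega
    obtain ⟨t1, t2, htne, hteq⟩ := Fintype.exists_ne_map_eq_of_card_lt
      (fun t : Fin (dS k M r j0 + 1) => ChiS k M r n a b c T T' j0 (t : ℕ)) hcard
    have hwlog : ∃ s1 s2 : Fin (dS k M r j0 + 1), (s1:ℕ) < (s2:ℕ) ∧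
        ChiS k M r n a b c T T' j0 (s1 : ℕ) = ChiS k M r n a b c T T' j0 (s2 : ℕ) := by
      rcases lt_trichotomy (t1:ℕ) (t2:ℕ) with h' | h' | h'
      · exact ⟨t1, t2, h', hteq⟩
      · exact (htne (Fin.ext h')).elim
      · exact ⟨t2, t1, h', hteq.symm⟩
    obtain ⟨s1, s2, hs12, hseq⟩ := hwlog
    set T2 : ℕ → ℕ := Function.update T j0 (s1:ℕ) with hT2
    set T2' : ℕ → ℕ := Function.update T' j0 (s2:ℕ) with hT2'
    have hagree : ∀ j', j0 < j' → j' < M → T2 j' = T j' ∧ T2' j' = T' j' := by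
      intro j' hgt hlt
      rw [hT2, hT2', Function.update_of_ne (by omega), Function.update_of_ne (by omega)]
      exact ⟨rfl, rfl⟩
    have hcongr : ∀ j t, j0 ≤ j → j < M →
        ChiS k M r n a b c T2 T2' j t = ChiS k M r n a b c T T' j t := by
      intro j t hj0j hjM
      funext p
      rw [ChiS, ChiS]
      rw [assembleS_congr k M r n a b hM hjM (fun j' h1 h2 => (hagree j' (by omega) h2)) t p.1 p.2]
    refine ⟨T2, T2', ?_, ?_⟩
    · intro j h1 h2
      by_cases hj : j = j0
      · subst hj
        rw [hT2, hT2', Function.update_self, Function.update_self]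
        refine ⟨hs12, ?_⟩
        have := s2.2
        omega
      · have hge : M - h ≤ j := by omega
        rw [hT2, hT2', Function.update_of_ne (by omega), Function.update_of_ne (by omega)]
        exact hp j hge h2
    · intro j h1 h2
      by_cases hj : j = j0
      · subst hj
        rw [hcongr _ _ le_rfl h2, hcongr _ _ le_rfl h2]
        rw [hT2, hT2', Function.update_self, Function.update_self]
        exact hseq
      · have hge : M - h ≤ j := by omega
        rw [hT2, hT2', Function.update_of_ne (by omega), Function.update_of_ne (by omega)]
        rw [hcongr _ _ (by omega) h2, hcongr _ _ (by omega) h2]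
        exact hchi j hge h2

lemma shelah (k M r : ℕ) (hk : 0 < k) (hM : 0 < M) (hr : 0 < r) (n : ℕ)
    (hn : fGR k M M r ≤ n) (a b : Fin (k+1)) (c : VWord (k+1) n → Fin r) :
    ∃ w : MWord (k+1) M n, IsMVarWord w ∧ Insensitive c a b w := by
  classical
  obtain ⟨T, T', hp, hchi⟩ := choosePairs k M r n a b hM c M le_rfl
  have hp' : ∀ j, j < M → T j < T' j ∧ T' j ≤ dS k M r j := fun j hj => hp j (by omega) hj
  have hchi' : ∀ j, j < M →
      ChiS k M r n a b c T T' j (T j) = ChiS k M r n a b c T T' j (T' j) :=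
    fun j hj => hchi j (by omega) hj
  have hNM : NS k M r M ≤ n := hn
  have hNsucc : ∀ j : ℕ, NS k M r (j+1) = NS k M r j + dS k M r j := NS_succ hk hM hr
  set w : MWord (k+1) M n := fun i =>
    if h2 : (i:ℕ) < NS k M r M then
      (if (i:ℕ) - NS k M r (blockOfS k M r i) < T (blockOfS k M r i) then Sum.inl a
       else if (i:ℕ) - NS k M r (blockOfS k M r i) < T' (blockOfS k M r i) then
         Sum.inr ⟨blockOfS k M r i, blockOfS_lt hM (i:ℕ)⟩
       else Sum.inl b)
    else Sum.inl a with hwdef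
  have hwlow : ∀ (i : Fin n) (j : ℕ) (hjM : j < M) (hle : NS k M r j ≤ (i:ℕ))
      (hlt : (i:ℕ) < NS k M r (j+1)),
      w i = (if (i:ℕ) - NS k M r j < T j then Sum.inl a
        else if (i:ℕ) - NS k M r j < T' j then Sum.inr (⟨j, hjM⟩ : Fin M)
        else Sum.inl b) := by
    intro i j hjM hle hlt
    have hNM' : NS k M r (j+1) ≤ NS k M r M := NS_mono k M r (by omega : j + 1 ≤ M)
    have h2 : (i:ℕ) < NS k M r M := by omega
    have hbo : blockOfS k M r (i:ℕ) = j := blockOfS_eq hjM hle hlt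
    simp only [hwdef, dif_pos h2, hbo]
  have hwhigh : ∀ i : Fin n, NS k M r M ≤ (i:ℕ) → w i = Sum.inl a := by
    intro i hi
    simp only [hwdef, dif_neg (by omega : ¬ (i:ℕ) < NS k M r M)]
  have hwinr : ∀ (i : Fin n) (j : Fin M), w i = Sum.inr j →
      ((j:ℕ) = blockOfS k M r (i:ℕ) ∧ (i:ℕ) < NS k M r M) := by
    intro i j hwi
    simp only [hwdef] at hwi
    by_cases h2 : (i:ℕ) < NS k M r M
    · rw [dif_pos h2] at hwi
      by_cases ha1 : (i:ℕ) - NS k M r (blockOfS k M r i) < T (blockOfS k M r i)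
      · rw [if_pos ha1] at hwi; exact absurd hwi (by simp)
      · rw [if_neg ha1] at hwi
        by_cases ha2 : (i:ℕ) - NS k M r (blockOfS k M r i) < T' (blockOfS k M r i)
        · rw [if_pos ha2] at hwi
          have := Sum.inr_injective hwi
          exact ⟨by rw [← this], h2⟩
        · rw [if_neg ha2] at hwi; exact absurd hwi (by simp)
    · rw [dif_neg h2] at hwi; exact absurd hwi (by simp)
  refine ⟨w, ⟨?_, ?_⟩, ?_⟩
  · -- each variable occurs
    intro j
    have hjM : (j:ℕ) < M := j.2
    have hTd := hp' (j:ℕ) hjM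
    have hj1M : (j:ℕ) + 1 ≤ M := hjM
    have h1 : NS k M r ((j:ℕ)+1) = NS k M r (j:ℕ) + dS k M r (j:ℕ) := hNsucc _
    have h2 : NS k M r ((j:ℕ)+1) ≤ NS k M r M := NS_mono k M r hj1M
    have hipos : NS k M r (j:ℕ) + T (j:ℕ) < n := by omega
    set i0 : Fin n := ⟨NS k M r (j:ℕ) + T (j:ℕ), hipos⟩ with hi0
    have hval : (i0:ℕ) = NS k M r (j:ℕ) + T (j:ℕ) := rfl
    refine ⟨i0, ?_⟩
    rw [hwlow i0 (j:ℕ) hjM (by omega) (by omega)]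
    rw [hval, Nat.add_sub_cancel_left]
    rw [if_neg (by omega), if_pos (by omega)]
  · -- block position
    intro i i' j j' hii' hj hj'
    obtain ⟨hjb, hiN⟩ := hwinr i j hj
    obtain ⟨hjb', hiN'⟩ := hwinr i' j' hj'
    have h1 : NS k M r (j:ℕ) ≤ (i:ℕ) := by rw [hjb]; exact blockOfS_spec1 k M r _
    have h2 : (j:ℕ) ≤ blockOfS k M r (i':ℕ) := blockOfS_ge j.2 (by omega)
    show j ≤ j'
    have : (j:ℕ) ≤ (j':ℕ) := by omega
    exact this
  · -- insensitivity via single flips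
    apply insensitive_of_flip
    intro x j0 hx hxj0
    have hj0M : (j0:ℕ) < M := j0.2
    have hTd := hp' (j0:ℕ) hj0M
    have hNle : NS k M r (j0:ℕ) ≤ n :=
      le_trans (NS_mono k M r (by omega : (j0:ℕ) ≤ M)) hNM
    set u : Fin (NS k M r (j0:ℕ)) → Option (Fin (k+1)) := fun q =>
      subst w x (Fin.castLE hNle q) with hudef
    set s : Fin (M - 1 - (j0:ℕ)) → Option (Fin (k+1)) := fun idx =>
      x ⟨(j0:ℕ) + 1 + (idx:ℕ), by omega⟩ with hsdef
    have claim : ∀ (t : ℕ) (xx : VWord (k+1) M), (∀ j, j ≠ j0 → xx j = x j) →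
        ((xx j0 = some a ∧ t = T' (j0:ℕ)) ∨ (xx j0 = some b ∧ t = T (j0:ℕ))) →
        subst w xx = assembleS k M r n a b T T' (j0:ℕ) t u s := by
      intro t xx hxx hcase
      funext i
      rw [assembleS]
      by_cases h1 : (i:ℕ) < NS k M r (j0:ℕ)
      · rw [dif_pos h1]
        rw [hudef]
        simp only
        have hieq : Fin.castLE hNle (⟨(i:ℕ), h1⟩ : Fin (NS k M r (j0:ℕ))) = i := Fin.ext rfl
        rw [hieq]
        rw [subst, subst]
        rcases hwi : w i with l | j
        · simp
        · simp only [Sum.elim_inr]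
          obtain ⟨hjb, _⟩ := hwinr i j hwi
          have hjne : j ≠ j0 := by
            intro hc
            subst hc
            have hsp := blockOfS_spec1 k M r (i:ℕ)
            rw [← hjb] at hsp
            omega
          rw [hxx j hjne]
      · rw [dif_neg h1]
        by_cases h2 : (i:ℕ) < NS k M r M
        · rw [if_pos h2]
          have hboM : blockOfS k M r (i:ℕ) < M := blockOfS_lt hM _
          have hbo1 : NS k M r (blockOfS k M r (i:ℕ)) ≤ (i:ℕ) := blockOfS_spec1 k M r _
          have hbo2 : (i:ℕ) < NS k M r (blockOfS k M r (i:ℕ) + 1) := blockOfS_spec2 hM h2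
          have hboge : (j0:ℕ) ≤ blockOfS k M r (i:ℕ) := blockOfS_ge hj0M (by omega)
          by_cases hbj : blockOfS k M r (i:ℕ) = (j0:ℕ)
          · rw [if_pos hbj]
            rw [hbj] at hbo1 hbo2
            rw [subst, hwlow i (j0:ℕ) hj0M hbo1 hbo2]
            rcases hcase with ⟨hxa, rfl⟩ | ⟨hxb, rfl⟩
            · by_cases hc1 : (i:ℕ) - NS k M r (j0:ℕ) < T (j0:ℕ)
              · have hc2 : (i:ℕ) - NS k M r (j0:ℕ) < T' (j0:ℕ) := by omega
                rw [if_pos hc1]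
                simp [hc2]
              · rw [if_neg hc1]
                by_cases hc2 : (i:ℕ) - NS k M r (j0:ℕ) < T' (j0:ℕ)
                · rw [if_pos hc2]
                  simp [hxa, hc2]
                · rw [if_neg hc2]
                  simp [hc2]
            · by_cases hc1 : (i:ℕ) - NS k M r (j0:ℕ) < T (j0:ℕ)
              · rw [if_pos hc1]
                simp [hc1]
              · rw [if_neg hc1]
                by_cases hc2 : (i:ℕ) - NS k M r (j0:ℕ) < T' (j0:ℕ)
                · rw [if_pos hc2]
                  simp [hxb, hc1]
                · rw [if_neg hc2]
                  simp [hc1]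
          · rw [if_neg hbj]
            have hbogt : (j0:ℕ) < blockOfS k M r (i:ℕ) := by omega
            rw [subst, hwlow i (blockOfS k M r (i:ℕ)) hboM hbo1 hbo2]
            by_cases hc1 : (i:ℕ) - NS k M r (blockOfS k M r (i:ℕ)) < T (blockOfS k M r (i:ℕ))
            · rw [if_pos hc1]; simp [hc1]
            · rw [if_neg hc1]
              by_cases hc2 : (i:ℕ) - NS k M r (blockOfS k M r (i:ℕ)) < T' (blockOfS k M r (i:ℕ))
              · rw [if_pos hc2]
                have h3 : blockOfS k M r (i:ℕ) - (j0:ℕ) - 1 < M - 1 - (j0:ℕ) := by omega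
                rw [if_neg hc1, if_pos hc2, dif_pos h3]
                simp only [Sum.elim_inr, hsdef]
                have hje : ((⟨(j0:ℕ) + 1 + (blockOfS k M r (i:ℕ) - (j0:ℕ) - 1), by omega⟩ : Fin M))
                    = ⟨blockOfS k M r (i:ℕ), hboM⟩ := by
                  apply Fin.ext
                  simp only
                  omega
                rw [hje]
                exact hxx ⟨blockOfS k M r (i:ℕ), hboM⟩ (fun hc => hbj (congrArg Fin.val hc))
              · rw [if_neg hc2]
                simp [hc1, hc2]
        · rw [if_neg h2]
          rw [subst, hwhigh i (by omega)]
          simp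
    have hxx1 : ∀ j, j ≠ j0 → x j = x j := fun _ _ => rfl
    have hA := claim (T' (j0:ℕ)) x hxx1 (Or.inl ⟨hxj0, rfl⟩)
    have hupd : ∀ j, j ≠ j0 → Function.update x j0 (some b) j = x j :=
      fun j hj => Function.update_of_ne hj _ x
    have hB := claim (T (j0:ℕ)) (Function.update x j0 (some b)) hupd
      (Or.inr ⟨Function.update_self j0 (some b) x, rfl⟩)
    have hchieq := congrFun (hchi' (j0:ℕ) hj0M) (u, s)
    rw [ChiS, ChiS] at hchieq
    simp only at hchieq
    rw [hA, hB]
    exact hchieq.symm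
lemma subst_msubst {k m m' n : ℕ} (w : MWord k m n) (u : Fin m → Fin k ⊕ Fin m')
    (x : Fin m' → Option (Fin k)) : subst (msubst w u) x = subst w (subst u x) := by
  funext i
  simp only [subst, msubst]
  rcases w i with l | j
  · simp
  · simp [subst]

lemma msubst_mvar {k m m' n : ℕ} {w : MWord k m n} {u : Fin m → Fin k ⊕ Fin m'}
    (hw : IsMVarWord w) (hu : IsMVarWord u) : IsMVarWord (msubst w u) := by
  constructor
  · intro j
    obtain ⟨p, hp⟩ := hu.1 j
    obtain ⟨i, hi⟩ := hw.1 p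
    exact ⟨i, by simp only [msubst]; rw [hi]; simpa using hp⟩
  · intro i i' j j' hii' hj hj'
    simp only [msubst] at hj hj'
    rcases hwi : w i with l | p
    · rw [hwi] at hj; exact absurd hj (by simp)
    · rw [hwi] at hj
      simp only [Sum.elim_inr] at hj
      rcases hwi' : w i' with l' | p'
      · rw [hwi'] at hj'; exact absurd hj' (by simp)
      · rw [hwi'] at hj'
        simp only [Sum.elim_inr] at hj'
        have hpp' : p ≤ p' := hw.2 i i' p p' hii' hwi hwi'
        rcases eq_or_lt_of_le hpp' with rfl | hlt
        · rw [hj] at hj'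
          exact le_of_eq (Sum.inr_injective hj')
        · exact hu.2 p p' j j' hlt hj hj'

lemma GR_step (k m r M : ℕ) (hk : 0 < k) (hm : 0 < m) (hr : 0 < r) (hM : 0 < M)
    (hGR : GRProp k m r M) : GRProp (k+1) m r (fGR k M M r) := by
  classical
  intro n hn c
  set a : Fin (k+1) := ⟨0, by omega⟩ with ha
  set b : Fin (k+1) := Fin.last k with hb
  obtain ⟨w, hw, hins⟩ := shelah k M r hk hM hr n hn a b c
  set c'' : VWord k M → Fin r :=
    fun y => c (subst w (fun j => Option.map Fin.castSucc (y j))) with hc''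
  obtain ⟨w', hw', col, hcol⟩ := hGR M le_rfl c''
  set w'' : MWord (k+1) m M := fun i => Sum.map Fin.castSucc id (w' i) with hw''def
  have hw''mvar : IsMVarWord w'' := by
    constructor
    · intro j
      obtain ⟨i, hi⟩ := hw'.1 j
      exact ⟨i, by rw [hw''def]; simp only; rw [hi]; rfl⟩
    · intro i i' j j' hii' hj hj'
      rw [hw''def] at hj hj'
      simp only at hj hj'
      rcases hwi : w' i with l | p
      · rw [hwi] at hj; exact absurd hj (by simp [Sum.map])
      · rw [hwi] at hj
        simp [Sum.map] at hj
        rcases hwi' : w' i' with l' | p'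
        · rw [hwi'] at hj'; exact absurd hj' (by simp [Sum.map])
        · rw [hwi'] at hj'
          simp [Sum.map] at hj'
          subst hj; subst hj'
          exact hw'.2 i i' p p' hii' hwi hwi'
  refine ⟨msubst w w'', msubst_mvar hw hw''mvar, col, ?_⟩
  intro x hx
  rw [subst_msubst]
  set Y : VWord (k+1) M := subst w'' x with hY
  set replb : Option (Fin (k+1)) → Option (Fin (k+1)) :=
    Option.map (fun l => if l = Fin.last k then a else l) with hreplb
  set Y' : VWord (k+1) M := fun i => replb (Y i) with hY'
  set low : Fin (k+1) → Fin k := fun l => if h : (l:ℕ) < k then ⟨l, h⟩ else ⟨0, hk⟩ with hlow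
  -- variable witnesses
  obtain ⟨jv, hjv⟩ := hx
  obtain ⟨iv, hiv⟩ := hw''mvar.1 jv
  have hYiv : Y iv = none := by simp only [hY, subst]; rw [hiv]; simpa using hjv
  have hYvar : IsVarWord Y := ⟨iv, hYiv⟩
  have hY'var : IsVarWord Y' := ⟨iv, by simp only [hY', hYiv]; rfl⟩
  have habne : a ≠ b := by
    rw [ha, hb]
    intro hc
    have := congrArg Fin.val hc
    simp [Fin.last] at this
    omega
  have hABe : ABEquiv a b Y Y' := by
    intro e he1 he2 i
    constructor
    · intro hYe
      simp only [hY', hYe, hreplb]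
      rcases e with _ | l
      · rfl
      · have : l ≠ Fin.last k := fun hc => he2 (by rw [hc, hb])
        simp [this]
    · intro hY'e
      simp only [hY'] at hY'e
      rcases hYi : Y i with _ | l
      · rw [hYi] at hY'e
        simp only [hreplb, Option.map_none] at hY'e
        exact hY'e
      · rw [hYi] at hY'e
        simp only [hreplb, Option.map_some] at hY'e
        by_cases hl : l = Fin.last k
        · rw [if_pos hl] at hY'e
          exact (he1 hY'e.symm).elim
        · rw [if_neg hl] at hY'e
          exact hY'e
  have hc1 : c (subst w Y) = c (subst w Y') := hins Y Y' hYvar hY'var hABe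
  -- Y' avoids b
  have hY'nob : ∀ i l, Y' i = some l → (l:ℕ) < k := by
    intro i l hl
    simp only [hY', hreplb] at hl
    rcases hYi : Y i with _ | l'
    · rw [hYi] at hl; simp at hl
    · rw [hYi] at hl
      simp only [Option.map_some] at hl
      by_cases hc' : l' = Fin.last k
      · rw [if_pos hc'] at hl
        have hla : l = a := (Option.some_injective _ hl).symm
        have hav : (a:ℕ) = 0 := rfl
        rw [hla, hav]
        omega
      · rw [if_neg hc'] at hl
        have : l = l' := (Option.some_injective _ hl).symm
        subst this
        have := l.2
        have hvne : (l:ℕ) ≠ k := fun hcc => hc' (Fin.ext (by simp [Fin.last, hcc]))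
        omega
  set yhat : VWord k M := fun i => Option.map low (Y' i) with hyhat
  have hY'eq : ∀ i, Y' i = Option.map Fin.castSucc (yhat i) := by
    intro i
    rcases hYi : Y' i with _ | l
    · simp only [hyhat, hYi]; rfl
    · have hlk := hY'nob i l hYi
      simp only [hyhat, hYi, Option.map_some, hlow]
      rw [dif_pos hlk]
      exact congrArg some (Fin.ext rfl)
  have hc2 : c (subst w Y') = c'' yhat := by
    rw [hc'']
    congr 1
    apply congrArg
    funext j
    exact (hY'eq j)
  -- yhat = subst w' xhat
  set xhat : VWord k m := fun j => Option.map low (replb (x j)) with hxhat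
  have hyeq : yhat = subst w' xhat := by
    funext i
    simp only [hyhat, hY', hY, subst]
    rcases hwi : w' i with l | j
    · have hwi'' : w'' i = Sum.inl (Fin.castSucc l) := by
        simp only [hw''def]; rw [hwi]; rfl
      rw [hwi'']
      simp only [Sum.elim_inl, hreplb]
      have hne : Fin.castSucc l ≠ Fin.last k := (Fin.castSucc_lt_last l).ne
      simp only [Option.map_some]
      rw [if_neg hne]
      simp only [hlow]
      rw [dif_pos (show ((Fin.castSucc l : Fin (k+1)):ℕ) < k from l.2)]
      exact congrArg some (Fin.ext rfl)
    · have hwi'' : w'' i = Sum.inr j := by simp only [hw''def]; rw [hwi]; rfl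
      rw [hwi'']
      simp only [Sum.elim_inr, hxhat]
  have hxhatvar : IsVarWord xhat := ⟨jv, by simp only [hxhat, hjv]; rfl⟩
  rw [hc1, hc2, hyeq]
  exact hcol xhat hxhatvar

lemma GR_main (m r : ℕ) (hm : 0 < m) (hr : 0 < r) :
    ∀ k, 0 < k → GRProp k m r (GRnum k m r) ∧ 0 < GRnum k m r ∧
      GRnum k m r ≤ GRbound m r (k - 1) := by
  obtain ⟨n₀, hn₀pos, hHn₀⟩ := HProp_holds m r
  have hHne : {n₀ | 0 < n₀ ∧ HProp m r n₀}.Nonempty := ⟨n₀, hn₀pos, hHn₀⟩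
  have hHmem : 0 < Hnum m r ∧ HProp m r (Hnum m r) := Nat.sInf_mem hHne
  intro k
  induction k with
  | zero => omega
  | succ k ih =>
    intro _
    rcases Nat.eq_zero_or_pos k with rfl | hk
    · have h1 : Hnum m r ∈ {n₀ | 0 < n₀ ∧ GRProp 1 m r n₀} :=
        ⟨hHmem.1, GRProp_one m r _ hHmem.2⟩
      have hGne : {n₀ | 0 < n₀ ∧ GRProp 1 m r n₀}.Nonempty := ⟨_, h1⟩
      have hGmem : 0 < GRnum 1 m r ∧ GRProp 1 m r (GRnum 1 m r) := Nat.sInf_mem hGne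
      refine ⟨hGmem.2, hGmem.1, ?_⟩
      have hle : GRnum 1 m r ≤ Hnum m r := Nat.sInf_le h1
      simpa [GRbound] using hle
    · obtain ⟨hGR, hpos, hbnd⟩ := ih hk
      set M := GRnum k m r with hM
      set F := fGR k M M r with hF
      have hstep : GRProp (k+1) m r F := GR_step k m r M hk hm hr hpos hGR
      have hFpos : 0 < F := fGR_pos k M M r hk hpos hr hpos
      have hmemF : F ∈ {n₀ | 0 < n₀ ∧ GRProp (k+1) m r n₀} := ⟨hFpos, hstep⟩
      have hGne : {n₀ | 0 < n₀ ∧ GRProp (k+1) m r n₀}.Nonempty := ⟨F, hmemF⟩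
      have hGmem : 0 < GRnum (k+1) m r ∧ GRProp (k+1) m r (GRnum (k+1) m r) :=
        Nat.sInf_mem hGne
      refine ⟨hGmem.2, hGmem.1, ?_⟩
      have hle : GRnum (k+1) m r ≤ F := Nat.sInf_le hmemF
      set B := GRbound m r (k - 1) with hB
      have h2 : F ≤ fGR k B B r := by
        calc F = fGR k M M r := hF
        _ ≤ fGR k M B r := fGR_mono_m k M r hbnd
        _ ≤ fGR k B B r := (fGR_mono_j k B r) hbnd
      obtain ⟨k', rfl⟩ : ∃ k', k = k' + 1 := ⟨k - 1, by omega⟩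
      have hbound_eq : GRbound m r (k' + 1) = fGR (k'+1) (GRbound m r k') (GRbound m r k') r :=
        rfl
      have hBk : B = GRbound m r k' := by rw [hB]; congr 1 <;> omega
      have hfin : GRnum (k'+1+1) m r ≤ fGR (k'+1) B B r := le_trans hle h2
      have hke : k' + 1 + 1 - 1 = k' + 1 := by omega
      rw [hke, hbound_eq, ← hBk]
      exact hfin


/-- `GR(k+1,m,r) ≤ f(k,M,M,r)` with `M = GR(k,m,r)`, and consequently `GR(k,m,r)` is
bounded by iterating `f` at most `k-1` times starting from `H(m,r)`. -/
theorem stmt_17 (k m r : ℕ) (hk : 0 < k) (hm : 0 < m) (hr : 0 < r) :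
    GRnum (k+1) m r ≤ fGR k (GRnum k m r) (GRnum k m r) r ∧
    GRnum k m r ≤ GRbound m r (k - 1) := by
  obtain ⟨hGR, hpos, hbnd⟩ := GR_main m r hm hr k hk
  refine ⟨?_, hbnd⟩
  have hstep : GRProp (k+1) m r (fGR k (GRnum k m r) (GRnum k m r) r) :=
    GR_step k m r (GRnum k m r) hk hm hr hpos hGR
  have hFpos : 0 < fGR k (GRnum k m r) (GRnum k m r) r :=
    fGR_pos k (GRnum k m r) (GRnum k m r) r hk hpos hr hpos
  exact Nat.sInf_le ⟨hFpos, hstep⟩
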